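/- Let n ≥ 1. The characteristic polynomial of the adjacency matrix of the graph K_2 ∨ (n·K_2 ⊔ K_{2n-2}) on 4n vertices is (x-1)^(n-1)·(x+1)^(3n-2)·(x³ - (2n-1)x² - (4n+1)x + 8n² - 10n - 1). -/

import Mathlib

open Matrix Polynomial

/-- Adjacency matrix of the graph `K_2 ∨ (n·K_2 ⊔ K_{2n-2})` on `4n` vertices:
vertices `0, 1` form the cone `K_2` (adjacent to everything), vertices
`2, …, 2n-1` form `K_{2n-2}`, and vertices `2n, …, 4n-1` are paired into `n`
copies of `K_2` (the pairs `{2m, 2m+1}`). -/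
def adjJoinDicyclic (n : ℕ) : Matrix (Fin (4 * n)) (Fin (4 * n)) ℝ :=
  Matrix.of fun i j =>
    if i ≠ j ∧ (i.val < 2 ∨ j.val < 2 ∨ (i.val < 2 * n ∧ j.val < 2 * n) ∨
        (2 * n ≤ i.val ∧ 2 * n ≤ j.val ∧ i.val / 2 = j.val / 2)) then 1 else 0

namespace DicycAux
noncomputable section
open Matrix Polynomial

abbrev V (m : ℕ) := Fin 2 ⊕ (Fin (2*m) ⊕ Fin 2 × Fin (m+1))

/-- adjacency of complete graph -/
def cg (k : ℕ) : Matrix (Fin k) (Fin k) ℝ := Matrix.of fun a b => if a = b then 0 else 1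

def Amat (m : ℕ) : Matrix (V m) (V m) ℝ :=
  fromBlocks (cg 2) (Matrix.of fun _ _ => 1) (Matrix.of fun _ _ => 1)
    (fromBlocks (cg (2*m)) 0 0 (blockDiagonal fun _ : Fin (m+1) => cg 2))

def emb (m : ℕ) : V m ≃ Fin (4*(m+1)) where
  toFun v := match v with
    | .inl a => ⟨a.val, by omega⟩
    | .inr (.inl b) => ⟨2 + b.val, by have := b.isLt; omega⟩
    | .inr (.inr (t, p)) => ⟨2*(m+1) + 2*p.val + t.val, by have := p.isLt; have := t.isLt; omega⟩
  invFun k :=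
    if h1 : k.val < 2 then .inl ⟨k.val, h1⟩
    else if h2 : k.val < 2*(m+1) then .inr (.inl ⟨k.val - 2, by omega⟩)
    else .inr (.inr (⟨(k.val - 2*(m+1)) % 2, by omega⟩, ⟨(k.val - 2*(m+1)) / 2, by have := k.isLt; omega⟩))
  left_inv := by
    rintro (a | b | ⟨t, p⟩)
    · have := a.isLt
      simp only []
      rw [dif_pos (by omega)]
    · have := b.isLt
      simp only []
      rw [dif_neg (by omega), dif_pos (by omega)]
      simp
    · have := t.isLt; have := p.isLt
      simp only []
      rw [dif_neg (by omega), dif_neg (by omega)]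
      refine congrArg Sum.inr (congrArg Sum.inr (Prod.ext (Fin.ext ?_) (Fin.ext ?_))) <;> simp <;> omega
  right_inv := by
    intro k
    have := k.isLt
    by_cases h1 : k.val < 2
    · simp only [dif_pos h1]
    · by_cases h2 : k.val < 2*(m+1)
      · simp only [dif_neg h1, dif_pos h2]
        exact Fin.ext (by simp; omega)
      · simp only [dif_neg h1, dif_neg h2]
        exact Fin.ext (by simp; omega)

lemma adj_eq (m : ℕ) :
    adjJoinDicyclic (m+1) = Matrix.reindex (emb m) (emb m) (Amat m) := by
  ext i j
  have hi := i.isLt; have hj := j.isLt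
  simp only [adjJoinDicyclic, Matrix.reindex_apply, Matrix.submatrix_apply, Matrix.of_apply,
    emb, Equiv.coe_fn_symm_mk]
  by_cases hi1 : i.val < 2 <;> by_cases hj1 : j.val < 2 <;>
    by_cases hi2 : i.val < 2*(m+1) <;> by_cases hj2 : j.val < 2*(m+1) <;>
      simp only [hi1, hj1, hi2, hj2, not_false_iff, dite_true, dite_false, dif_pos, dif_neg,
        dite_eq_ite] <;>
    simp only [Amat, cg, fromBlocks_apply₁₁, fromBlocks_apply₁₂, fromBlocks_apply₂₁,
      fromBlocks_apply₂₂, Matrix.of_apply, blockDiagonal_apply, Matrix.zero_apply,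
      ne_eq, Fin.ext_iff, Fin.mk.injEq, Prod.mk.injEq, one_apply, true_or, or_true, true_and,
      and_true, false_and, and_false, false_or, or_false, not_true, not_false_iff] <;>
    split_ifs <;> first | rfl | (exfalso; omega)


abbrev K := FractionRing (Polynomial ℝ)
def φ : Polynomial ℝ →+* K := algebraMap _ _
def x : K := φ X

lemma hφ : Function.Injective φ := IsFractionRing.injective _ _

lemma hsub (c : ℝ) : x - φ (C c) ≠ 0 := by
  intro h
  have h2 : φ (X - C c) = 0 := by rw [map_sub]; exact h
  have := hφ (h2.trans (map_zero φ).symm)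
  exact Polynomial.X_sub_C_ne_zero c this

lemma hx1 : x - 1 ≠ 0 := by simpa using hsub 1
lemma hx2 : x + 1 ≠ 0 := by
  have h := hsub (-1)
  simp only [map_neg, _root_.map_one] at h
  intro h2; exact h (by linear_combination h2)
lemma hxm (m : ℕ) : x + 1 - ((2*m : ℕ) : K) ≠ 0 := by
  have h := hsub (((2*m : ℕ) : ℝ) - 1)
  intro h2
  apply h
  simp only [map_sub, _root_.map_one, Polynomial.C_eq_natCast, map_natCast]
  linear_combination h2

def J (k : ℕ) : Matrix (Fin k) (Fin k) K := Matrix.of fun _ _ => 1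
def Dblk (k : ℕ) : Matrix (Fin k) (Fin k) K := (x+1) • 1 - J k
def Eblk (k : ℕ) : Matrix (Fin k) (Fin k) K :=
  (x+1)⁻¹ • 1 + ((x+1)*((x+1) - (k:K)))⁻¹ • J k

lemma J_mul_J (k : ℕ) : J k * J k = (k : K) • J k := by
  ext i j
  simp [J, Matrix.mul_apply, Finset.sum_const]

lemma Dblk_mul_Eblk (k : ℕ) (hk : (x+1) - (k:K) ≠ 0) : Dblk k * Eblk k = 1 := by
  set a := (x+1)⁻¹
  set b := ((x+1)*((x+1) - (k:K)))⁻¹ with hb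
  have h1 := hx2
  have h3 := mul_ne_zero hx2 hk
  have e1 : b * ((x+1)*((x+1)-(k:K))) = 1 := inv_mul_cancel₀ h3
  have e2 : (x+1) * a = 1 := mul_inv_cancel₀ hx2
  have hco : (x+1)*b = a + b*(k:K) := by
    apply mul_left_cancel₀ h1
    linear_combination e1 - e2
  rw [Dblk, Eblk]
  simp only [Matrix.sub_mul, Matrix.mul_add, smul_mul_assoc, mul_smul_comm, Matrix.one_mul,
    Matrix.mul_one, J_mul_J, smul_smul]
  rw [smul_sub, smul_sub, smul_smul, smul_smul, smul_smul, inv_mul_cancel₀ h1, one_smul,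
    mul_comm b (x+1), hco, add_smul]
  abel

lemma det_Dblk (k : ℕ) : (Dblk k).det = (x+1)^k * (1 - (k:K) * (x+1)⁻¹) := by
  have hDd : Dblk k = (x+1) • (1 + (Matrix.of fun _ _ => (1:K) : Matrix (Fin k) (Fin 1) K) *
      (Matrix.of fun _ _ => -(x+1)⁻¹ : Matrix (Fin 1) (Fin k) K)) := by
    ext i j
    simp only [Dblk, J, Matrix.sub_apply, Matrix.smul_apply, Matrix.one_apply, Matrix.add_apply,
      Matrix.mul_apply, Matrix.of_apply, Finset.univ_unique, Finset.sum_singleton, smul_eq_mul]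
    rcases eq_or_ne i j with h | h
    · simp [h, mul_add, mul_inv_cancel₀ hx2]
    · simp [h, mul_add, mul_inv_cancel₀ hx2]
  rw [hDd, det_smul, det_one_add_mul_comm, det_unique]
  simp only [Matrix.add_apply, Matrix.one_apply_eq, Matrix.mul_apply, Matrix.of_apply,
    Fintype.card_fin]
  rw [Finset.sum_const]
  simp only [Finset.card_univ, Fintype.card_fin, nsmul_eq_mul]
  ring

def DD (m : ℕ) : Matrix (V m) (V m) K :=
  fromBlocks (Dblk 2) 0 0 (fromBlocks (Dblk (2*m)) 0 0 (blockDiagonal fun _ : Fin (m+1) => Dblk 2))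

def EE (m : ℕ) : Matrix (V m) (V m) K :=
  fromBlocks (Eblk 2) 0 0 (fromBlocks (Eblk (2*m)) 0 0 (blockDiagonal fun _ : Fin (m+1) => Eblk 2))

def UU (m : ℕ) : Matrix (V m) (Fin 2) K :=
  Matrix.of fun v t => Sum.elim (fun _ => if t = 0 then (1:K) else 0)
    (fun _ => if t = 1 then 1 else 0) v

def VV (m : ℕ) : Matrix (Fin 2) (V m) K :=
  Matrix.of fun t v => Sum.elim (fun _ => if t = 1 then (1:K) else 0)
    (fun _ => if t = 0 then 1 else 0) v

lemma hk2 : (x + 1) - ((2:ℕ):K) ≠ 0 := by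
  intro h; exact hx1 (by push_cast at h; linear_combination h)

lemma DD_mul_EE (m : ℕ) : DD m * EE m = 1 := by
  rw [DD, EE, fromBlocks_multiply, fromBlocks_multiply]
  rw [← blockDiagonal_mul]
  simp only [Matrix.mul_zero, Matrix.zero_mul, add_zero, zero_add, Matrix.mul_one,
    Dblk_mul_Eblk 2 hk2, Dblk_mul_Eblk (2*m) (hxm m)]
  rw [show (fun _ : Fin (m+1) => (1 : Matrix (Fin 2) (Fin 2) K)) = 1 from rfl]
  rw [blockDiagonal_one, fromBlocks_one, fromBlocks_one]

lemma det_DD (m : ℕ) : (DD m).det =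
    ((x+1)^2 * (1 - 2 * (x+1)⁻¹)) * ((x+1)^(2*m) * (1 - (2*m:ℕ) * (x+1)⁻¹))
      * ((x+1)^2 * (1 - 2 * (x+1)⁻¹))^(m+1) := by
  rw [DD, det_fromBlocks_zero₂₁, det_fromBlocks_zero₂₁, det_blockDiagonal]
  simp only [det_Dblk, Finset.prod_const, Finset.card_univ, Fintype.card_fin]
  push_cast
  ring

set_option maxHeartbeats 2000000 in
lemma charmap (m : ℕ) : (charmatrix (Amat m)).map φ = DD m - UU m * VV m := by
  ext v w
  have hUV : (UU m * VV m) v w = (UU m v 0) * (VV m 0 w) + (UU m v 1) * (VV m 1 w) := by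
    rw [Matrix.mul_apply, Fin.sum_univ_two]
  rw [Matrix.map_apply, charmatrix_apply, Matrix.sub_apply, hUV]
  rcases v with a | b | ⟨t,p⟩ <;> rcases w with a' | b' | ⟨t',p'⟩ <;>
    simp only [Amat, cg, DD, UU, VV, Dblk, J, fromBlocks_apply₁₁, fromBlocks_apply₁₂,
      fromBlocks_apply₂₁, fromBlocks_apply₂₂, blockDiagonal_apply, Matrix.of_apply,
      Sum.elim_inl, Sum.elim_inr, Matrix.diagonal_apply, Sum.inl.injEq, Sum.inr.injEq,
      Prod.mk.injEq, Matrix.zero_apply, Matrix.sub_apply, Matrix.smul_apply, Matrix.one_apply,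
      smul_eq_mul, map_sub, map_zero, _root_.map_one, apply_ite φ,
      apply_ite (Polynomial.C (R := ℝ)), Polynomial.C_0, Polynomial.C_1, x,
      (show ((0:Fin 2) = 1) ↔ False by decide), (show ((1:Fin 2) = 0) ↔ False by decide),
      eq_self_iff_true, if_true, if_false]
  all_goals try split_ifs
  all_goals try ring
  all_goals tauto
lemma Eblk_rowsum (k : ℕ) (hk : (x+1) - (k:K) ≠ 0) (a : Fin k) :
    ∑ b : Fin k, Eblk k a b = ((x+1) - (k:K))⁻¹ := by
  have h1 := hx2
  simp only [Eblk, Matrix.add_apply, Matrix.smul_apply, Matrix.one_apply, J, Matrix.of_apply,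
    smul_eq_mul, mul_ite, mul_one, mul_zero]
  rw [Finset.sum_add_distrib, Finset.sum_ite_eq, Finset.sum_const]
  simp only [Finset.mem_univ, if_true, Finset.card_univ, Fintype.card_fin, nsmul_eq_mul]
  field_simp
  ring

def Wmid (m : ℕ) : Matrix (V m) (Fin 2) K :=
  Matrix.of fun v t =>
    Sum.elim (fun _ => if t = 0 then (x-1)⁻¹ else 0)
      (Sum.elim (fun _ => if t = 1 then ((x+1) - ((2*m:ℕ):K))⁻¹ else 0)
        (fun _ => if t = 1 then (x-1)⁻¹ else 0)) v

lemma EE_mul_UU (m : ℕ) : EE m * UU m = Wmid m := by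
  have h2 : ((x+1) - ((2:ℕ):K))⁻¹ = (x-1)⁻¹ := by
    rw [show ((2:ℕ):K) = 2 by norm_num, show x + 1 - 2 = x - 1 by ring]
  ext v t
  rw [Matrix.mul_apply]
  rcases v with a | b | ⟨t', p⟩
  · rw [Fintype.sum_sum_type]
    simp only [EE, UU, fromBlocks_apply₁₁, fromBlocks_apply₁₂, Matrix.zero_apply,
      Matrix.of_apply, Sum.elim_inl, Sum.elim_inr, zero_mul, Finset.sum_const_zero, add_zero,
      mul_ite, mul_one, mul_zero]
    rcases eq_or_ne t 0 with h | h
    · simp only [h, if_true, Eblk_rowsum 2 hk2 a, Wmid, Matrix.of_apply, Sum.elim_inl, h2,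
        ite_self, Finset.sum_const_zero, add_zero]
    · simp [h, Wmid]
  · rw [Fintype.sum_sum_type, Fintype.sum_sum_type]
    simp only [EE, UU, fromBlocks_apply₂₁, fromBlocks_apply₂₂, fromBlocks_apply₁₁,
      fromBlocks_apply₁₂, Matrix.zero_apply, Matrix.of_apply, Sum.elim_inl, Sum.elim_inr,
      zero_mul, Finset.sum_const_zero, add_zero, zero_add, mul_ite, mul_one, mul_zero]
    rcases eq_or_ne t 1 with h | h
    · simp only [h, if_true, Eblk_rowsum (2*m) (hxm m) b, Wmid, Matrix.of_apply, Sum.elim_inr,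
        Sum.elim_inl, ite_self, Finset.sum_const_zero, add_zero, zero_add]
    · simp [h, Wmid]
  · rw [Fintype.sum_sum_type, Fintype.sum_sum_type]
    simp only [EE, UU, fromBlocks_apply₂₁, fromBlocks_apply₂₂, fromBlocks_apply₁₁,
      fromBlocks_apply₁₂, fromBlocks_apply₂₂, Matrix.zero_apply, Matrix.of_apply, Sum.elim_inl,
      Sum.elim_inr, zero_mul, Finset.sum_const_zero, add_zero, zero_add, mul_ite, mul_one,
      mul_zero]
    rcases eq_or_ne t 1 with h | h
    · simp only [h, if_true]
      rw [Fintype.sum_prod_type]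
      simp only [blockDiagonal_apply, ite_mul, zero_mul, mul_one, ite_self,
        Finset.sum_const_zero, add_zero, zero_add]
      have hq : ∀ s : Fin 2, (∑ q : Fin (m+1), if p = q then Eblk 2 t' s else 0)
          = Eblk 2 t' s := by
        intro s; rw [Finset.sum_ite_eq]; simp
      simp only [hq, Eblk_rowsum 2 hk2 t', Wmid, Matrix.of_apply, Sum.elim_inr, h2, if_true]
    · simp [h, Wmid]

def sig (m : ℕ) : K := ((2*m:ℕ):K) * ((x+1) - ((2*m:ℕ):K))⁻¹ + (2*(m:K)+2) * (x-1)⁻¹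

lemma VV_mul_Wmid (m : ℕ) : VV m * Wmid m =
    Matrix.of (fun t s : Fin 2 =>
      if t = 0 then (if s = 1 then sig m else 0) else (if s = 0 then 2*(x-1)⁻¹ else 0)) := by
  ext t s
  rw [Matrix.mul_apply, Fintype.sum_sum_type, Fintype.sum_sum_type]
  fin_cases t <;> fin_cases s <;>
    simp only [VV, Wmid, sig, Matrix.of_apply, Sum.elim_inl, Sum.elim_inr,
      (show ((0:Fin 2) = 1) ↔ False by decide), (show ((1:Fin 2) = 0) ↔ False by decide),
      eq_self_iff_true, if_true, if_false, one_mul, zero_mul, mul_zero, mul_one, ite_self,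
      Finset.sum_const_zero, add_zero, zero_add, Finset.sum_const, Finset.card_univ,
      Fintype.card_fin, Fintype.card_prod, nsmul_eq_mul] <;>
    push_cast <;> ring

set_option maxHeartbeats 1000000 in
lemma Amat_charpoly (m : ℕ) : (Amat m).charpoly =
    (X - 1)^m * (X + 1)^(3*m+1) *
      (X^3 - C (2*(m:ℝ)+1) * X^2 - C (4*(m:ℝ)+5) * X + C (8*(m:ℝ)^2+6*(m:ℝ)-3)) := by
  apply hφ
  rw [Matrix.charpoly, RingHom.map_det, RingHom.mapMatrix_apply, charmap]
  have hfac : DD m - UU m * VV m = DD m * (1 - EE m * (UU m * VV m)) := by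
    rw [Matrix.mul_sub, Matrix.mul_one, ← Matrix.mul_assoc, DD_mul_EE, Matrix.one_mul]
  rw [hfac, det_mul, ← Matrix.mul_assoc, EE_mul_UU, det_one_sub_mul_comm, VV_mul_Wmid, det_DD]
  have hdet2 : (1 - Matrix.of (fun t s : Fin 2 =>
      if t = 0 then (if s = 1 then sig m else 0) else (if s = 0 then 2*(x-1)⁻¹ else 0))).det
      = 1 - sig m * (2*(x-1)⁻¹) := by
    rw [det_fin_two]
    simp [Matrix.one_apply]
  rw [hdet2]
  simp only [_root_.map_mul, map_pow, map_sub, map_add, _root_.map_one, map_ofNat,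
    map_natCast, sig]
  rw [show φ X = x from rfl]
  have h1 := hx1
  have h2 := hx2
  have h3 := hxm m
  push_cast at h3 ⊢
  have e1 : (x+1)^2*(1-2*(x+1)⁻¹) = (x-1)*(x+1) := by
    field_simp
    ring
  rw [e1]
  have key : (x-1)^2*(x+1)*((1-(2*(m:K))*(x+1)⁻¹) *
      (1 - (2*(m:K)*(x+1-2*(m:K))⁻¹ + (2*(m:K)+2)*(x-1)⁻¹)*(2*(x-1)⁻¹)))
      = x^3 - (2*(m:K)+1)*x^2 - (4*(m:K)+5)*x + (8*(m:K)^2+6*(m:K)-3) := by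
    field_simp
    ring
  rw [mul_pow]
  linear_combination ((x-1)^m*(x+1)^(3*m+1)) * key

end
end DicycAux

/-- For `n ≥ 1`, the characteristic polynomial of the adjacency matrix of
`K_2 ∨ (n·K_2 ⊔ K_{2n-2})` is
`(x-1)^(n-1) (x+1)^(3n-2) (x³ - (2n-1)x² - (4n+1)x + 8n² - 10n - 1)`. -/
theorem charpoly_ESCom_dicyclic (n : ℕ) (hn : 1 ≤ n) :
    (adjJoinDicyclic n).charpoly =
      (X - 1) ^ (n - 1) * (X + 1) ^ (3 * n - 2) *
        (X ^ 3 - C (2 * (n : ℝ) - 1) * X ^ 2 - C (4 * (n : ℝ) + 1) * X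
          + C (8 * (n : ℝ) ^ 2 - 10 * (n : ℝ) - 1)) := by
  obtain ⟨m, rfl⟩ : ∃ m, n = m + 1 := ⟨n - 1, by omega⟩
  rw [DicycAux.adj_eq m, Matrix.charpoly_reindex, DicycAux.Amat_charpoly]
  rw [show (m+1) - 1 = m from rfl, show 3*(m+1)-2 = 3*m+1 by omega]
  push_cast
  rw [show 2*((m:ℝ)+1)-1 = 2*(m:ℝ)+1 by ring, show 4*((m:ℝ)+1)+1 = 4*(m:ℝ)+5 by ring,
    show 8*((m:ℝ)+1)^2-10*((m:ℝ)+1)-1 = 8*(m:ℝ)^2+6*(m:ℝ)-3 by ring]
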